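/- Let G, H be graphs, u ∈ V(G), v ∈ V(H), and let A_k^F(w) be the number of k-cliques contained in the open neighborhood N(w) of vertex w in graph F. Then A_k^{G×H}((u,v)) = k! · A_k^G(u) · A_k^H(v). -/

import Mathlib

open MeasureTheory ProbabilityTheory Filter

noncomputable section

abbrev EdgeSlot (n : ℕ) := {s : Sym2 (Fin n) // ¬ s.IsDiag}

abbrev ERSpace (n : ℕ) := EdgeSlot n → Bool

/-- The Erdős–Rényi measure: each potential edge present independently with prob `p`. -/
def erMeasure (n : ℕ) (p : ℝ) : Measure (ERSpace n) :=
  Measure.pi fun _ => (PMF.bernoulli (min (Real.toNNReal p) 1) (min_le_right _ _)).toMeasure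

def edgeSlot {n : ℕ} {u v : Fin n} (h : u ≠ v) : EdgeSlot n :=
  ⟨s(u, v), by simpa using h⟩

/-- The graph associated to an outcome of edge indicators. -/
def erGraph {n : ℕ} (ω : ERSpace n) : SimpleGraph (Fin n) where
  Adj u v := ∃ h : u ≠ v, ω (edgeSlot h) = true
  symm := ⟨by
    rintro u v ⟨h, hw⟩
    refine ⟨h.symm, ?_⟩
    have he : edgeSlot h.symm = edgeSlot h := Subtype.ext (Sym2.eq_swap)
    rw [he]; exact hw⟩
  loopless := ⟨by rintro u ⟨h, -⟩; exact h rfl⟩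

/-- Number of `k`-cliques in a graph on a finite vertex set. -/
def cliqueCount {V : Type*} [Fintype V] (G : SimpleGraph V) (k : ℕ) : ℕ :=
  Set.ncard {s : Finset V | G.IsNClique k s}

/-- The tensor (categorical) product of two simple graphs. -/
def tensorProd {α β : Type*} (G : SimpleGraph α) (H : SimpleGraph β) :
    SimpleGraph (α × β) where
  Adj x y := G.Adj x.1 y.1 ∧ H.Adj x.2 y.2
  symm := ⟨fun _ _ ⟨h1, h2⟩ => ⟨h1.symm, h2.symm⟩⟩
  loopless := ⟨fun x h => G.loopless.irrefl x.1 h.1⟩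

instance {α β : Type*} (G : SimpleGraph α) (H : SimpleGraph β)
    [DecidableRel G.Adj] [DecidableRel H.Adj] : DecidableRel (tensorProd G H).Adj :=
  fun x y => (instDecidableAnd : Decidable (G.Adj x.1 y.1 ∧ H.Adj x.2 y.2))

/-- Number of `k`-cliques contained in the open neighborhood of `w`. -/
def nbhdCliqueCount {V : Type*} [Fintype V] (G : SimpleGraph V) (k : ℕ) (w : V) : ℕ :=
  Set.ncard {s : Finset V | G.IsNClique k s ∧ ∀ x ∈ s, G.Adj w x}

/-- Number of isolated vertices. -/
def isolatedCount {V : Type*} [Fintype V] (K : SimpleGraph V) : ℕ :=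
  Set.ncard {v : V | ∀ w, ¬ K.Adj v w}

end

/-! An ordered `k`-clique in the neighbourhood of `w` is a tuple `Fin k → V` of pairwise adjacent
neighbours of `w`; adjacency is irreflexive, so such a tuple is injective and every `k`-clique
in `N(w)` is the image of exactly `k!` of them. Adjacency in the tensor product is coordinatewise,
so a tuple of pairs is an ordered clique around `(u, v)` iff its two coordinate tuples are
ordered cliques around `u` and `v`. Hence `k! · A(u, v) = (k! · A(u)) · (k! · A(v))`. -/

open Finset Function

section InjectiveTuples

variable {V : Type*} [DecidableEq V] {k : ℕ}

noncomputable def injectiveTuplesImageEqEquiv (s : Finset V) :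
    {f : Fin k → V // Injective f ∧ univ.image f = s} ≃ (Fin k ≃ s) where
  toFun f :=
    Equiv.ofBijective (fun i => ⟨f.1 i, f.2.2.subset (mem_image_of_mem _ (mem_univ i))⟩)
      ⟨fun _ _ h => f.2.1 (congrArg Subtype.val h), fun x => by
        obtain ⟨i, -, hi⟩ := mem_image.mp (f.2.2.symm.subset x.2)
        exact ⟨i, Subtype.ext hi⟩⟩
  invFun e := ⟨fun i => e i, Subtype.val_injective.comp e.injective, by
    ext x
    simp only [mem_image, mem_univ, true_and]
    exact ⟨by rintro ⟨i, rfl⟩; exact (e i).2,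
      fun hx => ⟨e.symm ⟨x, hx⟩, by simp⟩⟩⟩
  left_inv _ := rfl
  right_inv _ := Equiv.ext fun _ => rfl

theorem card_injective_tuples_image_eq {s : Finset V} (hs : #s = k) :
    Nat.card {f : Fin k → V // Injective f ∧ univ.image f = s} = k.factorial := by
  rw [Nat.card_congr (injectiveTuplesImageEqEquiv s), Nat.card_eq_fintype_card,
    Fintype.card_equiv (finCongr hs.symm |>.trans s.equivFin.symm), Fintype.card_fin]

def injectiveTuplesSigmaEquiv (p : Finset V → Prop) :
    {f : Fin k → V // Injective f ∧ p (univ.image f)} ≃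
      Σ s : {s : Finset V // p s ∧ #s = k},
        {f : Fin k → V // Injective f ∧ univ.image f = s} where
  toFun f := ⟨⟨univ.image f.1, f.2.2, by rw [card_image_of_injective _ f.2.1, card_fin]⟩,
    ⟨f.1, f.2.1, rfl⟩⟩
  invFun f := ⟨f.2.1, f.2.2.1, by rw [f.2.2.2]; exact f.1.2.1⟩
  left_inv _ := rfl
  right_inv x := Sigma.subtype_ext (Subtype.ext x.2.2.2) rfl

theorem ncard_injective_tuples [Fintype V] (p : Finset V → Prop) :
    {f : Fin k → V | Injective f ∧ p (univ.image f)}.ncard =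
      k.factorial * {s | p s ∧ #s = k}.ncard := by
  classical
  rw [← Nat.card_coe_set_eq, ← Nat.card_coe_set_eq, Set.coe_ofPred, Set.coe_ofPred,
    Nat.card_congr (injectiveTuplesSigmaEquiv p), Nat.card_sigma,
    Fintype.sum_congr _ _ fun s => card_injective_tuples_image_eq s.2.2]
  simp [Nat.card_eq_fintype_card, mul_comm]

end InjectiveTuples

namespace SimpleGraph

variable {V : Type*} (G : SimpleGraph V) {k : ℕ}

theorem pairwise_adj_iff_injective_and_isClique {ι : Type*} {f : ι → V} :
    Pairwise (G.Adj on f) ↔ Injective f ∧ G.IsClique (Set.range f) := by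
  refine ⟨fun h => ⟨fun i j hij => ?_, h.range_pairwise⟩, fun ⟨hinj, hf⟩ i j hij =>
    hf (Set.mem_range_self i) (Set.mem_range_self j) (hinj.ne hij)⟩
  by_contra hne
  exact (h hne).ne hij

def nbhdCliqueTuples (k : ℕ) (w : V) : Set (Fin k → V) :=
  {f | Pairwise (G.Adj on f) ∧ ∀ i, G.Adj w (f i)}

theorem ncard_nbhdCliqueTuples [Fintype V] (w : V) :
    (G.nbhdCliqueTuples k w).ncard = k.factorial * nbhdCliqueCount G k w := by
  classical
  have := ncard_injective_tuples (k := k) fun s => G.IsClique (s : Set V) ∧ ∀ x ∈ s, G.Adj w x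
  convert this using 2
  · ext f
    simp only [nbhdCliqueTuples, Set.mem_ofPred_eq, pairwise_adj_iff_injective_and_isClique,
      coe_image, coe_univ, Set.image_univ, mem_image, mem_univ, true_and, forall_exists_index,
      forall_apply_eq_imp_iff, and_assoc]
  · unfold nbhdCliqueCount
    congr 1
    ext s
    simp only [isNClique_iff, Set.mem_ofPred_eq]
    tauto

end SimpleGraph

section TensorProd

variable {α β : Type*} (G : SimpleGraph α) (H : SimpleGraph β) (k : ℕ) (u : α) (v : β)

def tensorProdNbhdCliqueTuplesEquiv :
    (tensorProd G H).nbhdCliqueTuples k (u, v) ≃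
      G.nbhdCliqueTuples k u × H.nbhdCliqueTuples k v where
  toFun f := (⟨Prod.fst ∘ f.1, fun _ _ hij => (f.2.1 hij).1, fun i => (f.2.2 i).1⟩,
    ⟨Prod.snd ∘ f.1, fun _ _ hij => (f.2.1 hij).2, fun i => (f.2.2 i).2⟩)
  invFun f := ⟨fun i => (f.1.1 i, f.2.1 i), fun _ _ hij => ⟨f.1.2.1 hij, f.2.2.1 hij⟩,
    fun i => ⟨f.1.2.2 i, f.2.2.2 i⟩⟩
  left_inv _ := rfl
  right_inv _ := rfl

theorem ncard_nbhdCliqueTuples_tensorProd :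
    ((tensorProd G H).nbhdCliqueTuples k (u, v)).ncard =
      (G.nbhdCliqueTuples k u).ncard * (H.nbhdCliqueTuples k v).ncard := by
  rw [← Nat.card_coe_set_eq, Nat.card_congr (tensorProdNbhdCliqueTuplesEquiv G H k u v),
    Nat.card_prod, Nat.card_coe_set_eq, Nat.card_coe_set_eq]

end TensorProd

theorem tensorProd_nbhdCliqueCount {α β : Type*} [Fintype α] [Fintype β]
    (G : SimpleGraph α) (H : SimpleGraph β) (k : ℕ) (u : α) (v : β) :
    nbhdCliqueCount (tensorProd G H) k (u, v)
      = k.factorial * nbhdCliqueCount G k u * nbhdCliqueCount H k v := by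
  refine Nat.eq_of_mul_eq_mul_left k.factorial_pos ?_
  rw [← SimpleGraph.ncard_nbhdCliqueTuples, ncard_nbhdCliqueTuples_tensorProd,
    G.ncard_nbhdCliqueTuples, H.ncard_nbhdCliqueTuples]
  ring
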